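/- arXiv:2605.12456 — 2 statements merged into one kernel-verified Lean document; each statement's English description precedes it below -/
import Mathlib

section
/- Let p_1, ..., p_T in (0,1] and suppose the detection score S_T = sum_{t=1}^T s_t where E[s_t] = H_{1/p_t} (the generalized harmonic number). Then E[S_T] >= T + (pi^2/6 - 1) * H_T, where H_T = -sum_{t=1}^T p_t ln(p_t). -/
/-!
Telescoping `∑ (1/(n+1) - 1/(n+2)) = 1` splits off the `1` from `H_x`; the remainder has terms
`1/(n+2) - 1/(n+1+x) = (x-1)/((n+2)(n+1+x)) ≥ ((x-1)/x) / (n+2)²`, so the Basel sum gives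
`H_x ≥ 1 + (π²/6 - 1)(1 - 1/x)`. At `x = 1/p` this is `1 + (π²/6 - 1)(1 - p)`, and
`-p ln p ≤ 1 - p`. Summing over the tokens, linearity of expectation gives the bound.
-/

open MeasureTheory Real

open Filter Topology in
theorem Antitone.hasSum_sub_succ {f : ℕ → ℝ} (hf : Antitone f) {l : ℝ}
    (hl : Tendsto f atTop (𝓝 l)) : HasSum (fun n ↦ f n - f (n + 1)) (f 0 - l) := by
  refine (hasSum_iff_tendsto_nat_of_nonneg (fun n ↦ sub_nonneg.2 (hf n.le_succ)) _).2 ?_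
  simp only [Finset.sum_range_sub']
  exact hl.const_sub _

theorem hasSum_one_div_add_one_sub_one_div_add_two :
    HasSum (fun n : ℕ ↦ 1 / ((n : ℝ) + 1) - 1 / ((n : ℝ) + 2)) 1 := by
  have hanti : Antitone fun n : ℕ ↦ 1 / ((n : ℝ) + 1) := fun m n hmn ↦
    one_div_le_one_div_of_le (by positivity) (by gcongr)
  simpa [add_assoc, one_add_one_eq_two] using
    hanti.hasSum_sub_succ tendsto_one_div_add_atTop_nhds_zero_nat

theorem hasSum_one_div_add_two_sq :
    HasSum (fun n : ℕ ↦ 1 / ((n : ℝ) + 2) ^ 2) (π ^ 2 / 6 - 1) := by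
  have h := (hasSum_nat_add_iff' 2).2 hasSum_zeta_two
  norm_num [Finset.sum_range_succ] at h
  simpa using h

/-- The generalized harmonic number `H_x = ∑ₙ (1/(n+1) - 1/(n+1+x))`, which equals the
harmonic number `H_x` when `x` is a natural number. -/
noncomputable def generalizedHarmonic (x : ℝ) : ℝ :=
  ∑' n : ℕ, (1 / (n + 1 : ℝ) - 1 / ((n + 1 : ℝ) + x))

theorem one_div_add_one_sub_one_div_add_le {x : ℝ} (hx : 0 ≤ x) (n : ℕ) :
    1 / ((n : ℝ) + 1) - 1 / ((n + 1 : ℝ) + x) ≤ x * (1 / ((n : ℝ) + 1) ^ 2) := by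
  rw [div_sub_div _ _ (by positivity) (by positivity), mul_one_div, div_le_div_iff₀ (by positivity) (by positivity)]
  nlinarith [mul_nonneg hx hx]

theorem summable_generalizedHarmonic {x : ℝ} (hx : 0 ≤ x) :
    Summable fun n : ℕ ↦ 1 / (n + 1 : ℝ) - 1 / ((n + 1 : ℝ) + x) := by
  have hnonneg (n : ℕ) : 0 ≤ 1 / (n + 1 : ℝ) - 1 / ((n + 1 : ℝ) + x) :=
    sub_nonneg.2 <| one_div_le_one_div_of_le (by positivity) (by linarith)
  refine .of_nonneg_of_le hnonneg (one_div_add_one_sub_one_div_add_le hx) (.mul_left x ?_)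
  exact_mod_cast (summable_nat_add_iff 1).2 (summable_one_div_nat_pow.2 one_lt_two)

theorem sub_one_div_mul_one_div_add_two_sq_le {x : ℝ} (hx : 1 ≤ x) (n : ℕ) :
    (x - 1) / x * (1 / ((n : ℝ) + 2) ^ 2) ≤ 1 / ((n : ℝ) + 2) - 1 / ((n + 1 : ℝ) + x) := by
  have hx0 : 0 < x := by linarith
  rw [div_sub_div _ _ (by positivity) (by positivity), div_mul_div_comm,
    div_le_div_iff₀ (by positivity) (by positivity)]
  have : (0 : ℝ) ≤ (x - 1) * (n + 1) := by nlinarith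
  nlinarith [mul_nonneg this (by positivity : (0 : ℝ) ≤ x - 1)]

theorem one_add_mul_le_generalizedHarmonic {x : ℝ} (hx : 1 ≤ x) :
    1 + (π ^ 2 / 6 - 1) * ((x - 1) / x) ≤ generalizedHarmonic x := by
  have hlower := hasSum_one_div_add_one_sub_one_div_add_two.add
    (hasSum_one_div_add_two_sq.mul_left ((x - 1) / x))
  rw [mul_comm]
  refine hasSum_le (fun n ↦ ?_) hlower (summable_generalizedHarmonic (by linarith)).hasSum
  linarith [sub_one_div_mul_one_div_add_two_sq_le hx n]

theorem one_add_mul_negMulLog_le_generalizedHarmonic_one_div {p : ℝ} (hp₀ : 0 < p)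
    (hp₁ : p ≤ 1) : 1 + (π ^ 2 / 6 - 1) * negMulLog p ≤ generalizedHarmonic (1 / p) := by
  have hx : 1 ≤ 1 / p := by rwa [le_one_div one_pos hp₀, div_one]
  have hc : 0 ≤ π ^ 2 / 6 - 1 := by nlinarith [pi_gt_three]
  have hsub : (1 / p - 1) / (1 / p) = 1 - p := by field_simp
  calc 1 + (π ^ 2 / 6 - 1) * negMulLog p
      ≤ 1 + (π ^ 2 / 6 - 1) * ((1 / p - 1) / (1 / p)) := by
        rw [hsub]; gcongr; exact negMulLog_le_one_sub_self hp₀.le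
    _ ≤ generalizedHarmonic (1 / p) := one_add_mul_le_generalizedHarmonic hx

theorem expected_score_entropy_bound_general
    {Ω : Type*} [MeasurableSpace Ω] (μ : Measure Ω)
    (T : ℕ) (p : Fin T → ℝ) (hp : ∀ t, p t ∈ Set.Ioc (0 : ℝ) 1)
    (s : Fin T → Ω → ℝ) (hint : ∀ t, Integrable (s t) μ)
    (hE : ∀ t, ∫ ω, s t ω ∂μ =
      ∑' n : ℕ, (1 / (n + 1 : ℝ) - 1 / ((n + 1 : ℝ) + 1 / p t))) :
    ∫ ω, (∑ t, s t ω) ∂μ ≥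
      T + (π ^ 2 / 6 - 1) * (∑ t, -(p t * Real.log (p t))) := by
  have hterm (t : Fin T) : 1 + (π ^ 2 / 6 - 1) * negMulLog (p t) ≤ ∫ ω, s t ω ∂μ :=
    hE t ▸ one_add_mul_negMulLog_le_generalizedHarmonic_one_div (hp t).1 (hp t).2
  calc ∫ ω, (∑ t, s t ω) ∂μ = ∑ t, ∫ ω, s t ω ∂μ := integral_finsetSum _ fun t _ ↦ hint t
    _ ≥ ∑ t, (1 + (π ^ 2 / 6 - 1) * negMulLog (p t)) := Finset.sum_le_sum fun t _ ↦ hterm t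
    _ = T + (π ^ 2 / 6 - 1) * (∑ t, -(p t * Real.log (p t))) := by
      simp [Finset.sum_add_distrib, Finset.mul_sum, negMulLog]

/-- Expected score under H₁: if each token score `s t` has expectation equal to the
generalized harmonic number `H_{1/p t}`, then
`E[S_T] ≥ T + (π²/6 - 1) H_T` with `H_T = -∑ t, p t log (p t)`. -/
theorem expected_score_entropy_bound
    {Ω : Type*} [MeasurableSpace Ω] (μ : Measure Ω) [IsProbabilityMeasure μ]
    (T : ℕ) (p : Fin T → ℝ) (hp : ∀ t, p t ∈ Set.Ioc (0 : ℝ) 1)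
    (s : Fin T → Ω → ℝ) (hint : ∀ t, Integrable (s t) μ)
    (hE : ∀ t, ∫ ω, s t ω ∂μ =
      ∑' n : ℕ, (1 / (n + 1 : ℝ) - 1 / ((n + 1 : ℝ) + 1 / p t))) :
    ∫ ω, (∑ t, s t ω) ∂μ ≥
      T + (π ^ 2 / 6 - 1) * (∑ t, -(p t * Real.log (p t))) :=
  expected_score_entropy_bound_general μ T p hp s hint hE
end

section
/- Under dual-key early-fusion detection with aggregated per-token score T_t = (1-alpha) s_t^(1) + alpha s_t^(2), where with probability 1-alpha one has E[s_t^(1)] = H_{1/p_t}, E[s_t^(2)] = 1, and with probability alpha one has E[s_t^(1)] = 1, E[s_t^(2)] = H_{1/p_t}, the expected total score satisfies E[S_T] >= T + (alpha^2 + (1-alpha)^2)(pi^2/6 - 1) H_T. -/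
open MeasureTheory ProbabilityTheory Real

/-!
Conditioning on the key, the expected fused score of token `t` is
`θ H_{1/p_t} + (1 - θ)` with `θ = α² + (1 - α)²`. Writing
`1/(n+1) - 1/(n+1+x) = (1/(n+1) - 1/(n+2)) + (1/(n+2) - 1/(n+1+x))`, the first part telescopes
to `1` and the second is at least `(1 - 1/x)/(n+2)²`, whose sum is `(1 - 1/x)(π²/6 - 1)`;
with `x = 1/p` and `-p log p ≤ 1 - p` this gives `H_{1/p} ≥ 1 + (π²/6 - 1)(-p log p)`.
-/

/-- The harmonic number `H_x = ψ(x + 1) + γ` at a real argument `x`. -/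
noncomputable def genHarmonic (x : ℝ) : ℝ :=
  ∑' n : ℕ, (1 / (n + 1 : ℝ) - 1 / ((n + 1 : ℝ) + x))

lemma hasSum_one_div_succ_sub_one_div_succ_succ :
    HasSum (fun n : ℕ => 1 / (n + 1 : ℝ) - 1 / (n + 2 : ℝ)) 1 := by
  have hpartial : ∀ n : ℕ, ∑ i ∈ Finset.range n, (1 / (i + 1 : ℝ) - 1 / (i + 2 : ℝ)) =
      1 - 1 / (n + 1 : ℝ) := by
    intro n
    induction n with
    | zero => simp
    | succ n ih => rw [Finset.sum_range_succ, ih]; push_cast; ring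
  refine (hasSum_iff_tendsto_nat_of_nonneg
    (fun n => sub_nonneg.2 (one_div_le_one_div_of_le (by positivity) (by linarith))) 1).2 ?_
  simp_rw [hpartial]
  simpa using (tendsto_one_div_add_atTop_nhds_zero_nat (𝕜 := ℝ)).const_sub 1

lemma hasSum_one_div_nat_add_two_sq :
    HasSum (fun n : ℕ => 1 / ((n : ℝ) + 2) ^ 2) (π ^ 2 / 6 - 1) := by
  simpa [Finset.sum_range_succ] using (hasSum_nat_add_iff' 2).2 hasSum_zeta_two

lemma summable_genHarmonic_term {x : ℝ} (hx : 0 ≤ x) :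
    Summable (fun n : ℕ => 1 / (n + 1 : ℝ) - 1 / ((n + 1 : ℝ) + x)) := by
  have hsq : Summable (fun n : ℕ => 1 / ((n : ℝ) + 1) ^ 2) := by
    simpa using Real.summable_one_div_nat_add_rpow 1 2
  refine Summable.of_nonneg_of_le (fun n => ?_) (fun n => ?_) (hsq.mul_left x)
  · exact sub_nonneg.2 (one_div_le_one_div_of_le (by positivity) (by linarith))
  · rw [one_div, one_div, inv_sub_inv (by positivity) (by positivity), add_sub_cancel_left,
      mul_one_div, sq]
    exact div_le_div_of_nonneg_left hx (by positivity)
      (mul_le_mul_of_nonneg_left (by linarith) (by positivity))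

lemma one_add_sub_mul_le_genHarmonic_one_div {q : ℝ} (hq : 0 < q) :
    1 + (1 - q) * (π ^ 2 / 6 - 1) ≤ genHarmonic (1 / q) := by
  refine hasSum_le (fun n => ?_)
    (hasSum_one_div_succ_sub_one_div_succ_succ.add
      (hasSum_one_div_nat_add_two_sq.mul_left (1 - q)))
    (summable_genHarmonic_term (by positivity)).hasSum
  have hgap : 1 / (n + 1 : ℝ) - 1 / ((n + 1 : ℝ) + 1 / q) -
      (1 / (n + 1 : ℝ) - 1 / (n + 2 : ℝ) + (1 - q) * (1 / ((n : ℝ) + 2) ^ 2)) =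
      (n + 1) * (1 - q) ^ 2 / ((n + 2) ^ 2 * (q * (n + 1) + 1)) := by
    field_simp
    ring
  have : 0 ≤ (n + 1 : ℝ) * (1 - q) ^ 2 / ((n + 2) ^ 2 * (q * (n + 1) + 1)) := by positivity
  linarith

lemma one_add_mul_negMulLog_le_genHarmonic_one_div {q : ℝ} (hq : 0 < q) :
    1 + (π ^ 2 / 6 - 1) * negMulLog q ≤ genHarmonic (1 / q) := by
  have hζ : 0 ≤ π ^ 2 / 6 - 1 := hasSum_one_div_nat_add_two_sq.nonneg fun n => by positivity
  nlinarith [one_add_sub_mul_le_genHarmonic_one_div hq, negMulLog_le_one_sub_self hq.le]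

section TotalExpectation

variable {Ω : Type*} [MeasurableSpace Ω] {μ : Measure Ω} {s : Set Ω}

lemma setIntegral_eq_measureReal_mul_integral_cond [IsFiniteMeasure μ] (f : Ω → ℝ) :
    ∫ ω in s, f ω ∂μ = μ.real s * ∫ ω, f ω ∂μ[|s] := by
  rcases eq_or_ne (μ s) 0 with hs | hs
  · simp [Measure.restrict_eq_zero.mpr hs, measureReal_def, hs]
  · rw [ProbabilityTheory.cond, integral_smul_measure, smul_eq_mul, ENNReal.toReal_inv,
      measureReal_def, mul_inv_cancel_left₀ (ENNReal.toReal_ne_zero.mpr ⟨hs, measure_ne_top μ s⟩)]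

lemma integral_eq_cond_add_cond_compl [IsFiniteMeasure μ] (hs : MeasurableSet s) {f : Ω → ℝ}
    (hf : Integrable f μ) :
    ∫ ω, f ω ∂μ = μ.real s * ∫ ω, f ω ∂μ[|s] + μ.real sᶜ * ∫ ω, f ω ∂μ[|sᶜ] := by
  rw [← integral_add_compl hs hf, setIntegral_eq_measureReal_mul_integral_cond,
    setIntegral_eq_measureReal_mul_integral_cond]

lemma integral_dualKey_score [IsProbabilityMeasure μ] (hs : MeasurableSet s) {α : ℝ}
    (hμs : μ.real s = α) {f g : Ω → ℝ} (hf : Integrable f μ) (hg : Integrable g μ) {h : ℝ}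
    (hfs : ∫ ω, f ω ∂μ[|s] = 1) (hfsc : ∫ ω, f ω ∂μ[|sᶜ] = h)
    (hgs : ∫ ω, g ω ∂μ[|s] = h) (hgsc : ∫ ω, g ω ∂μ[|sᶜ] = 1) :
    ∫ ω, ((1 - α) * f ω + α * g ω) ∂μ = (α ^ 2 + (1 - α) ^ 2) * h + 2 * α * (1 - α) := by
  rw [integral_add (hf.const_mul _) (hg.const_mul _), integral_const_mul, integral_const_mul,
    integral_eq_cond_add_cond_compl hs hf, integral_eq_cond_add_cond_compl hs hg,
    probReal_compl_eq_one_sub hs, hμs, hfs, hfsc, hgs, hgsc]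
  ring

end TotalExpectation

/-- Dual-key early-fusion detection: the aggregated per-token score is
`T_t = (1-α) s¹_t + α s²_t`, where with probability `1-α` (key 1 used) the conditional
expectations are `E[s¹_t] = H_{1/p t}`, `E[s²_t] = 1`, and with probability `α` (key 2
used) they are `E[s¹_t] = 1`, `E[s²_t] = H_{1/p t}`. Then
`E[S_T] ≥ T + (α² + (1-α)²)(π²/6 - 1) H_T`. -/
theorem dual_key_early_fusion_bound
    {Ω : Type*} [MeasurableSpace Ω] (μ : Measure Ω) [IsProbabilityMeasure μ]
    (T : ℕ) (α : ℝ) (hα : α ∈ Set.Icc (0 : ℝ) 1)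
    (p : Fin T → ℝ) (hp : ∀ t, p t ∈ Set.Ioc (0 : ℝ) 1)
    (K : Fin T → Ω → Bool) (hKmeas : ∀ t, Measurable (K t))
    (hK : ∀ t, μ {ω | K t ω = true} = ENNReal.ofReal α)
    (s1 s2 : Fin T → Ω → ℝ)
    (hint1 : ∀ t, Integrable (s1 t) μ) (hint2 : ∀ t, Integrable (s2 t) μ)
    (hE1f : ∀ t, ∫ ω, s1 t ω ∂μ[|{ω | K t ω = false}] =
      ∑' n : ℕ, (1 / (n + 1 : ℝ) - 1 / ((n + 1 : ℝ) + 1 / p t)))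
    (hE2f : ∀ t, ∫ ω, s2 t ω ∂μ[|{ω | K t ω = false}] = 1)
    (hE1t : ∀ t, ∫ ω, s1 t ω ∂μ[|{ω | K t ω = true}] = 1)
    (hE2t : ∀ t, ∫ ω, s2 t ω ∂μ[|{ω | K t ω = true}] =
      ∑' n : ℕ, (1 / (n + 1 : ℝ) - 1 / ((n + 1 : ℝ) + 1 / p t))) :
    ∫ ω, (∑ t, ((1 - α) * s1 t ω + α * s2 t ω)) ∂μ ≥
      T + (α ^ 2 + (1 - α) ^ 2) * (π ^ 2 / 6 - 1) * (∑ t, -(p t * Real.log (p t))) := by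
  have hscore : ∀ t, ∫ ω, ((1 - α) * s1 t ω + α * s2 t ω) ∂μ =
      (α ^ 2 + (1 - α) ^ 2) * genHarmonic (1 / p t) + 2 * α * (1 - α) := by
    intro t
    have hA : MeasurableSet {ω | K t ω = true} := hKmeas t (measurableSet_singleton true)
    have hcompl : {ω | K t ω = true}ᶜ = {ω | K t ω = false} := by ext; simp
    refine integral_dualKey_score hA
      (by rw [measureReal_def, hK t, ENNReal.toReal_ofReal hα.1]) (hint1 t) (hint2 t)
      (hE1t t) ?_ (hE2t t) ?_
    · rw [hcompl, hE1f t]; rfl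
    · rw [hcompl, hE2f t]
  have hint : ∀ t ∈ Finset.univ, Integrable (fun ω => (1 - α) * s1 t ω + α * s2 t ω) μ :=
    fun t _ => ((hint1 t).const_mul _).add ((hint2 t).const_mul _)
  rw [integral_finsetSum _ hint, ge_iff_le]
  calc (T : ℝ) + (α ^ 2 + (1 - α) ^ 2) * (π ^ 2 / 6 - 1) * ∑ t, -(p t * Real.log (p t))
      = ∑ t, (1 + (α ^ 2 + (1 - α) ^ 2) * ((π ^ 2 / 6 - 1) * negMulLog (p t))) := by
        simp [Finset.sum_add_distrib, Finset.mul_sum, negMulLog, mul_assoc]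
    _ ≤ ∑ t, ∫ ω, ((1 - α) * s1 t ω + α * s2 t ω) ∂μ := Finset.sum_le_sum fun t _ => by
        rw [hscore t]
        nlinarith [one_add_mul_negMulLog_le_genHarmonic_one_div (hp t).1,
          sq_nonneg α, sq_nonneg (1 - α)]
end
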